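/- arXiv:2311.08238 — 6 statements merged into one kernel-verified Lean document; each statement's English description precedes it below -/
import Mathlib

section
/- Let k be an algebraically closed field of characteristic zero and consider the map F : k^3 → k^3 given by F(a,b,c) = (1 + c(a^2 - b^3 - b), a, b + c + c^2(a^2 - b^3 - b)). Then the image of F equals k^3 minus the curve E = {(w_1,w_2,w_3) : w_1 = 0 and w_2^2 - w_3^3 - w_3 = 0}. -/
/-- The image of `F(a,b,c) = (1 + c(a² - b³ - b), a, b + c + c²(a² - b³ - b))` is the
complement of the plane cubic curve `{w₁ = 0, w₂² - w₃³ - w₃ = 0}` in `k³`. -/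
theorem stmt1 {k : Type*} [Field k] [IsAlgClosed k] [CharZero k] :
    Set.range (fun p : k × k × k =>
      (1 + p.2.2 * (p.1 ^ 2 - p.2.1 ^ 3 - p.2.1), p.1,
        p.2.1 + p.2.2 + p.2.2 ^ 2 * (p.1 ^ 2 - p.2.1 ^ 3 - p.2.1)))
      = {w : k × k × k | ¬ (w.1 = 0 ∧ w.2.1 ^ 2 - w.2.2 ^ 3 - w.2.2 = 0)} := by
  ext ⟨w₁, w₂, w₃⟩
  simp only [Set.mem_range, Set.mem_setOf_eq, Prod.mk.injEq]
  constructor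
  · rintro ⟨⟨a, b, c⟩, h1, h2, h3⟩ ⟨e1, e2⟩
    rw [← h1] at e1
    rw [← h2, ← h3] at e2
    have hb : b + c + c ^ 2 * (a ^ 2 - b ^ 3 - b) = b := by linear_combination c * e1
    rw [hb] at e2
    rw [e2] at e1
    simp at e1
  · intro h
    by_cases hw : w₁ = 0
    · have hq : w₂ ^ 2 - w₃ ^ 3 - w₃ ≠ 0 := fun hc => h ⟨hw, hc⟩
      refine ⟨(w₂, w₃, -(w₂ ^ 2 - w₃ ^ 3 - w₃)⁻¹), ?_, rfl, ?_⟩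
      · rw [hw]; field_simp; ring
      · field_simp
        ring
    · obtain ⟨b, hb⟩ := IsAlgClosed.exists_root
        ((Polynomial.C w₃ - Polynomial.X) *
          (Polynomial.C (w₂ ^ 2) - Polynomial.X ^ 3 - Polynomial.X)
          - Polynomial.C (w₁ * (w₁ - 1))) (by
          have h4 : ((Polynomial.C w₃ - Polynomial.X) *
              (Polynomial.C (w₂ ^ 2) - Polynomial.X ^ 3 - Polynomial.X)
              - Polynomial.C (w₁ * (w₁ - 1)) : Polynomial k).degree = 4 := by
            compute_degree!
          rw [h4]; norm_num)
      simp only [Polynomial.IsRoot, Polynomial.eval_sub, Polynomial.eval_mul,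
        Polynomial.eval_add, Polynomial.eval_pow, Polynomial.eval_C, Polynomial.eval_X] at hb
      have hcq : ((w₃ - b) / w₁) * (w₂ ^ 2 - b ^ 3 - b) = w₁ - 1 := by
        field_simp
        linear_combination hb
      refine ⟨(w₂, b, (w₃ - b) / w₁), ?_, rfl, ?_⟩
      · linear_combination hcq
      · have h3 : b + (w₃ - b) / w₁ + ((w₃ - b) / w₁) ^ 2 * (w₂ ^ 2 - b ^ 3 - b)
            = b + ((w₃ - b) / w₁) * w₁ := by
          linear_combination ((w₃ - b) / w₁) * hcq
        rw [h3]
        field_simp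
        ring
end

section
/- Let k be an algebraically closed field of characteristic zero and let f : k^3 → k^3 be given by f(a,b,c) = (1 + cb, a, b + c(1 + cb)). Then the image of f is exactly k^3 \ {(w_1,w_2,w_3) : w_1 = 0 and w_3 = 0}, i.e., the complement of the line {w_1 = w_3 = 0}. -/
/-- The image of `f(a,b,c) = (1 + cb, a, b + c(1 + cb))` is the complement of
the line `{w₁ = 0, w₃ = 0}` in `k³`. -/
theorem stmt2 {k : Type*} [Field k] [IsAlgClosed k] [CharZero k] :
    Set.range (fun p : k × k × k =>
      (1 + p.2.2 * p.2.1, p.1, p.2.1 + p.2.2 * (1 + p.2.2 * p.2.1)))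
      = {w : k × k × k | ¬ (w.1 = 0 ∧ w.2.2 = 0)} := by
  ext ⟨w1, w2, w3⟩
  simp only [Set.mem_range, Set.mem_setOf_eq, Prod.mk.injEq, Prod.exists]
  constructor
  · rintro ⟨a, b, c, h1, h2, h3⟩ ⟨e1, e3⟩
    rw [e1] at h1
    rw [e3] at h3
    rw [h1, mul_zero, add_zero] at h3
    rw [h3, mul_zero, add_zero] at h1
    exact one_ne_zero h1
  · intro h
    by_cases h1 : w1 = 0
    · have h3 : w3 ≠ 0 := fun h3 => h ⟨h1, h3⟩
      refine ⟨w2, w3, -1/w3, ?_, rfl, ?_⟩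
      · rw [h1]; field_simp; ring
      · field_simp; ring
    · obtain ⟨s, hs⟩ := IsAlgClosed.exists_pow_nat_eq
        (w3 ^ 2 - 4 * w1 * (w1 - 1)) (n := 2) (by norm_num)
      set c : k := (w3 + s) / (2 * w1) with hc
      have hq : w1 * c ^ 2 - w3 * c + (w1 - 1) = 0 := by
        rw [hc]
        have h2 : (2 : k) ≠ 0 := two_ne_zero
        field_simp
        linear_combination hs
      exact ⟨w2, w3 - c * w1, c, by linear_combination -hq, rfl,
        by linear_combination -c * hq⟩
end

section
/- Let k be an algebraically closed field of characteristic zero and let F : k^3 → k^3 be given by F(a,b,c) = (1 + cb + a^2, a, b + c(1 + cb) + a^3). Then the image of F is exactly k^3 minus the twisted cubic A = {(t^2, t, t^3) : t ∈ k} = {(w_1,w_2,w_3) : w_2^2 = w_1 and w_2^3 = w_3}. -/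
theorem quadratic_aux {k : Type*} [Field k] [CharZero k] (u v s : k) (hu : u ≠ 0)
    (hs : s ^ 2 = v ^ 2 - 4 * u * (u - 1)) :
    ((v + s) / (2 * u)) * (v - ((v + s) / (2 * u)) * u) = u - 1 := by
  have h2 : (2 : k) * u ≠ 0 := mul_ne_zero two_ne_zero hu
  field_simp
  linear_combination -hs

/-- The image of `F(a,b,c) = (1 + cb + a², a, b + c(1 + cb) + a³)` is the complement of
the twisted cubic `{(t², t, t³)} = {w₂² = w₁, w₂³ = w₃}` in `k³`. -/
theorem stmt3 {k : Type*} [Field k] [IsAlgClosed k] [CharZero k] :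
    Set.range (fun p : k × k × k =>
      (1 + p.2.2 * p.2.1 + p.1 ^ 2, p.1, p.2.1 + p.2.2 * (1 + p.2.2 * p.2.1) + p.1 ^ 3))
      = {w : k × k × k | ¬ (w.2.1 ^ 2 = w.1 ∧ w.2.1 ^ 3 = w.2.2)} := by
  ext ⟨x, y, z⟩
  simp only [Set.mem_range, Set.mem_setOf_eq, Prod.mk.injEq]
  constructor
  · rintro ⟨⟨a, b, c⟩, h1, rfl, h3⟩ ⟨e1, e2⟩
    dsimp only at h1 h3 e1 e2
    have h10 : (1 : k) = 0 := by
      linear_combination -(1 + c ^ 2) * e1 + (1 + c ^ 2) * h1 + c * e2 - c * h3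
    exact one_ne_zero h10
  · intro h
    by_cases hu : x - y ^ 2 = 0
    · have hv : z - y ^ 3 ≠ 0 := fun hv =>
        h ⟨by linear_combination -hu, by linear_combination -hv⟩
      refine ⟨⟨y, z - y ^ 3, -1 / (z - y ^ 3)⟩, ?_, rfl, ?_⟩
      · field_simp
        linear_combination -hu
      · field_simp
        ring
    · obtain ⟨s, hs⟩ := IsAlgClosed.exists_pow_nat_eq
        ((z - y ^ 3) ^ 2 - 4 * (x - y ^ 2) * ((x - y ^ 2) - 1)) (n := 2) (by norm_num)
      set c := ((z - y ^ 3) + s) / (2 * (x - y ^ 2)) with hc_def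
      have hc : c * ((z - y ^ 3) - c * (x - y ^ 2)) = (x - y ^ 2) - 1 :=
        quadratic_aux _ _ _ hu hs
      refine ⟨⟨y, (z - y ^ 3) - c * (x - y ^ 2), c⟩, ?_, rfl, ?_⟩
      · linear_combination hc
      · linear_combination c * hc
end

section
/- Let k be an algebraically closed field and F : k^n → k^n a dominant polynomial map. Then the complement k^n \ F(k^n) of the image does not contain the zero set of any nonconstant polynomial; that is, for every nonconstant g ∈ k[w_1,...,w_n], there exists w with g(w) = 0 and w ∈ F(k^n). -/
open MvPolynomial

lemma isUnit_exists_C {R : Type*} [CommRing R] [IsDomain R] :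
    ∀ (n : ℕ) (p : MvPolynomial (Fin n) R), IsUnit p → ∃ a : R, p = C a := by
  intro n
  induction n with
  | zero => intro p _; exact ⟨_, p.eq_C_of_isEmpty⟩
  | succ m ih =>
    intro p hp
    let e := MvPolynomial.finSuccEquiv R m
    have hu : IsUnit (e p) := hp.map e
    have hdeg := Polynomial.degree_eq_zero_of_isUnit hu
    have heq : e p = Polynomial.C ((e p).coeff 0) := Polynomial.eq_C_of_degree_eq_zero hdeg
    have hc : IsUnit ((e p).coeff 0) := by
      rw [heq, Polynomial.isUnit_C] at hu; exact hu
    obtain ⟨a, ha⟩ := ih _ hc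
    refine ⟨a, ?_⟩
    have : e p = e (C a) := by
      rw [heq, ha]
      show _ = e (algebraMap R _ a)
      rw [AlgEquiv.commutes]
      rfl
    exact e.injective this

lemma exists_root_of_ne_unit {k : Type*} [Field k] [IsAlgClosed k] {n : ℕ}
    (h : MvPolynomial (Fin n) k) (hne : ¬ IsUnit h) :
    ∃ z : Fin n → k, eval z h = 0 := by
  by_contra hc
  push_neg at hc
  have hZ : zeroLocus k (Ideal.span {h}) = (⊥ : Set (Fin n → k)) := by
    ext z
    simp only [Set.bot_eq_empty, Set.mem_empty_iff_false, iff_false, mem_zeroLocus_iff]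
    intro hall
    exact hc z (by simpa using hall h (Ideal.subset_span rfl))
  have h1 : (1 : MvPolynomial (Fin n) k) ∈ (Ideal.span {h}).radical := by
    rw [← vanishingIdeal_zeroLocus_eq_radical (K := k), hZ]
    simp [mem_vanishingIdeal_iff]
  obtain ⟨m, hm⟩ := h1
  rw [one_pow] at hm
  rw [Ideal.mem_span_singleton] at hm
  exact hne (isUnit_of_dvd_one hm)

/-- The complement of the image of a dominant polynomial endomorphism of `k^n` contains no
hypersurface: the image meets the zero set of every nonconstant polynomial. -/
theorem stmt9 {k : Type*} [Field k] [IsAlgClosed k]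
    (n : ℕ) (F : Fin n → MvPolynomial (Fin n) k)
    (hdom : Function.Injective fun g : MvPolynomial (Fin n) k => aeval F g) :
    ∀ g : MvPolynomial (Fin n) k, 0 < g.totalDegree →
      ∃ w : Fin n → k, eval w g = 0 ∧ ∃ z : Fin n → k, (fun i => eval z (F i)) = w := by
  intro g hg
  have hne : ¬ IsUnit (aeval F g) := by
    intro hu
    obtain ⟨a, ha⟩ := isUnit_exists_C n _ hu
    have : g = C a := hdom (by simpa using ha)
    rw [this] at hg
    simp at hg
  obtain ⟨z, hz⟩ := exists_root_of_ne_unit (aeval F g) hne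
  refine ⟨fun i => eval z (F i), ?_, z, rfl⟩
  have : aeval F g = eval₂ C F g := rfl
  rw [← hz, this, ← eval_assoc]
  rfl
end

section
/- Let k be an algebraically closed field of characteristic zero, and let ψ : k^4 → k^3 be given by ψ(a,b,c,d) = (1 + c(a^2 − b^3 − b), a, b + d + cd(a^2 − b^3 − b)). Then ψ is surjective onto k^3 \ E, where E = {(w_1,w_2,w_3) : w_1 = 0 and w_2^2 − w_3^3 − w_3 = 0}, and its image is contained in k^3 \ E. -/
/-- The map `ψ(a,b,c,d) = (1 + c(a² - b³ - b), a, b + d + cd(a² - b³ - b))` from `k⁴` to `k³`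
has image exactly the complement of the cubic curve `E = {w₁ = 0, w₂² - w₃³ - w₃ = 0}`. -/
theorem stmt12 {k : Type*} [Field k] [IsAlgClosed k] [CharZero k] :
    Set.range (fun p : k × k × k × k =>
      (1 + p.2.2.1 * (p.1 ^ 2 - p.2.1 ^ 3 - p.2.1), p.1,
        p.2.1 + p.2.2.2 + p.2.2.1 * p.2.2.2 * (p.1 ^ 2 - p.2.1 ^ 3 - p.2.1)))
      = {w : k × k × k | ¬ (w.1 = 0 ∧ w.2.1 ^ 2 - w.2.2 ^ 3 - w.2.2 = 0)} := by
  ext ⟨u, v, w⟩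
  simp only [Set.mem_range, Set.mem_setOf_eq, Prod.mk.injEq, not_and]
  constructor
  · rintro ⟨⟨a, b, c, d⟩, h1, h2, h3⟩ hu hc
    dsimp only at h1 h2 h3
    subst h2
    have hct : c * (a ^ 2 - b ^ 3 - b) = -1 := by linear_combination h1 + hu
    have hw : w = b := by linear_combination -h3 + d * hct
    rw [hw] at hc
    rw [hc, mul_zero] at hct
    exact one_ne_zero (neg_eq_zero.mp hct.symm)
  · intro h
    by_cases hu : u = 0
    · have ht := h hu
      refine ⟨⟨v, w, -(v ^ 2 - w ^ 3 - w)⁻¹, 0⟩, ?_, rfl, ?_⟩ <;> field_simp <;> simp [hu]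
    · by_cases hu1 : u = 1
      · exact ⟨⟨v, w, 0, 0⟩, by simp [hu1], rfl, by ring⟩
      · by_cases hv : v = 0
        · refine ⟨⟨v, 1, (u - 1) / (-2), (w - 1) / u⟩, ?_, rfl, ?_⟩
          · rw [hv]; field_simp; ring
          · rw [hv]; field_simp; ring
        · refine ⟨⟨v, 0, (u - 1) / v ^ 2, w / u⟩, ?_, rfl, ?_⟩
          · field_simp; ring
          · field_simp; ring
end

section
/- Let k be an algebraically closed field of characteristic zero and let q ∈ k[x_1,...,x_{n-1}] be nonconstant. Define ψ : k^{n+1} → k^n by ψ(a_1,...,a_{n-1}, c, b) = (1 + c·q(a), a_1, ..., a_{n-2}, a_{n-1} + b·(1 + c·q(a))). Then the image of ψ is contained in k^n \ Z where Z = {w : w_1 = 0, q(w_2,...,w_n) = 0}; moreover, if q contains a nonzero pure-power monomial in its last variable of degree deg q, then ψ is surjective onto k^n \ Z. -/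
open MvPolynomial

lemma stmt16_aux_single {n : ℕ} (m : Fin (n + 1) →₀ ℕ) {d : ℕ}
    (hsum : (m.sum fun _ e => e) ≤ d) (hlast : m (Fin.last n) = d) :
    m = Finsupp.single (Fin.last n) d := by
  have hsum' : ∑ i, m i ≤ d := by
    rwa [Finsupp.sum_fintype _ _ (fun _ => rfl)] at hsum
  ext i
  rcases eq_or_ne i (Fin.last n) with rfl | hi
  · simp [hlast]
  · rw [Finsupp.single_eq_of_ne' (fun h => hi h.symm)]
    by_contra hmi
    have h1 : d + 1 ≤ ∑ j, m j := by
      calc d + 1 = m (Fin.last n) + 1 := by rw [hlast]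
        _ ≤ m (Fin.last n) + m i := by omega
        _ = ∑ j ∈ {Fin.last n, i}, m j := by
            rw [Finset.sum_pair (fun h => hi h.symm)]
        _ ≤ ∑ j, m j := Finset.sum_le_sum_of_subset (Finset.subset_univ _)
    omega

/-- If `q` has a nonzero pure-power coefficient in its last variable of degree `deg q`, then
for any fixed values of the other variables there is some value of the last variable where
`q` does not vanish. -/
lemma stmt16_aux {k : Type*} [Field k] [CharZero k] {n : ℕ}
    (q : MvPolynomial (Fin (n + 1)) k)
    (hc : coeff (Finsupp.single (Fin.last n) q.totalDegree) q ≠ 0)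
    (v : Fin (n + 1) → k) :
    ∃ t : k, eval (Function.update v (Fin.last n) t) q ≠ 0 := by
  classical
  set d := q.totalDegree with hd
  set L := Fin.last n with hL
  set g : Fin (n + 1) → Polynomial k :=
    fun i => if i = L then Polynomial.X else Polynomial.C (v i) with hg
  set P : Polynomial k := eval₂ Polynomial.C g q with hP
  have heval : ∀ t : k, Polynomial.eval t P = eval (Function.update v L t) q := by
    intro t
    have h1 : Polynomial.eval t P =
        eval₂ ((Polynomial.evalRingHom t).comp Polynomial.C)
          (fun i => Polynomial.eval t (g i)) q :=
      MvPolynomial.eval₂_comp_left (Polynomial.evalRingHom t) Polynomial.C g q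
    have h2 : (Polynomial.evalRingHom t).comp Polynomial.C = RingHom.id k := by
      ext x; simp
    have h3 : (fun i => Polynomial.eval t (g i)) = Function.update v L t := by
      funext i
      rcases eq_or_ne i L with rfl | hi
      · simp [hg]
      · simp [hg, hi, Function.update_of_ne hi]
    rw [h1, h2, h3, eval₂_id]
  have hcoeff : P.coeff d = coeff (Finsupp.single L d) q := by
    rw [hP, eval₂]
    rw [Finsupp.sum, Polynomial.finset_sum_coeff]
    have hterm : ∀ m ∈ q.support,
        (Polynomial.C (q.coeff m) * m.prod fun i e => g i ^ e).coeff d =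
          if m = Finsupp.single L d then q.coeff m * ∏ i ∈ Finset.univ.erase L, v i ^ m i
          else 0 := by
      intro m hm
      have hprod : (m.prod fun i e => g i ^ e) =
          Polynomial.C (∏ i ∈ Finset.univ.erase L, v i ^ m i) * Polynomial.X ^ m L := by
        rw [Finsupp.prod_pow]
        rw [← Finset.prod_erase_mul _ _ (Finset.mem_univ L)]
        congr 1
        · rw [map_prod]
          refine Finset.prod_congr rfl fun i hi => ?_
          simp only [Finset.mem_erase] at hi
          rw [show g i = Polynomial.C (v i) from if_neg hi.1, ← Polynomial.C_pow]
        · rw [show g L = Polynomial.X from if_pos rfl]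
      rw [hprod, ← mul_assoc, ← Polynomial.C_mul, Polynomial.coeff_C_mul,
        Polynomial.coeff_X_pow]
      rcases eq_or_ne m (Finsupp.single L d) with rfl | hne
      · simp
      · rw [if_neg, if_neg hne, mul_zero]
        intro hdm
        exact hne (stmt16_aux_single m (le_totalDegree hm) hdm.symm)
    refine Eq.trans (Finset.sum_congr rfl hterm) ?_
    have h0 : Finsupp.single L d ∈ q.support := by rwa [mem_support_iff]
    refine Eq.trans (Finset.sum_eq_single (Finsupp.single L d)
      (fun m _ hne => if_neg hne) (fun h => absurd h0 h)) ?_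
    rw [if_pos rfl]
    have : ∀ i ∈ Finset.univ.erase L, v i ^ (Finsupp.single L d) i = 1 := by
      intro i hi
      simp only [Finset.mem_erase] at hi
      rw [Finsupp.single_apply, if_neg (fun h => hi.1 h.symm), pow_zero]
    rw [Finset.prod_congr rfl this, Finset.prod_const_one, mul_one]
  have hP0 : P ≠ 0 := fun h => hc (by rw [← hcoeff, h, Polynomial.coeff_zero])
  by_contra hcon
  push_neg at hcon
  exact hP0 (Polynomial.zero_of_eval_zero P fun t => by rw [heval t]; exact hcon t)

/-- For nonconstant `q` in the variables `w₂,…,w_N` (here `N = n+2`), the map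
`ψ(a,c,b) = (1 + c·q(a), a₁, …, a_{N-2}, a_{N-1} + b(1 + c·q(a)))` has image contained in
`k^N \ Z` with `Z = {w₁ = 0, q(w₂,…,w_N) = 0}`; moreover if `q` has a nonzero coefficient on
the pure power of its last variable of degree `deg q`, then `ψ` is surjective onto `k^N \ Z`. -/
theorem stmt16 {k : Type*} [Field k] [IsAlgClosed k] [CharZero k]
    (n : ℕ) (q : MvPolynomial (Fin (n + 1)) k) (hq : 0 < q.totalDegree) :
    (Set.range (fun p : (Fin (n + 1) → k) × k × k =>
        (Fin.cons (1 + p.2.1 * eval p.1 q)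
          (fun i : Fin (n + 1) => if i = Fin.last n then
            p.1 i + p.2.2 * (1 + p.2.1 * eval p.1 q) else p.1 i) : Fin (n + 2) → k))
      ⊆ {w : Fin (n + 2) → k | ¬ (w 0 = 0 ∧ eval (fun i => w i.succ) q = 0)}) ∧
    (coeff (Finsupp.single (Fin.last n) q.totalDegree) q ≠ 0 →
      Set.range (fun p : (Fin (n + 1) → k) × k × k =>
        (Fin.cons (1 + p.2.1 * eval p.1 q)
          (fun i : Fin (n + 1) => if i = Fin.last n then
            p.1 i + p.2.2 * (1 + p.2.1 * eval p.1 q) else p.1 i) : Fin (n + 2) → k))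
      = {w : Fin (n + 2) → k | ¬ (w 0 = 0 ∧ eval (fun i => w i.succ) q = 0)}) := by
  classical
  have hsub : (Set.range (fun p : (Fin (n + 1) → k) × k × k =>
        (Fin.cons (1 + p.2.1 * eval p.1 q)
          (fun i : Fin (n + 1) => if i = Fin.last n then
            p.1 i + p.2.2 * (1 + p.2.1 * eval p.1 q) else p.1 i) : Fin (n + 2) → k))
      ⊆ {w : Fin (n + 2) → k | ¬ (w 0 = 0 ∧ eval (fun i => w i.succ) q = 0)}) := by
    rintro w ⟨⟨a, c, b⟩, rfl⟩
    rintro ⟨h0, h1⟩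
    simp only [Fin.cons_zero] at h0
    simp only [Fin.cons_succ] at h1
    have ha : (fun i : Fin (n + 1) => if i = Fin.last n then
        a i + b * (1 + c * eval a q) else a i) = a := by
      funext i
      split <;> simp [h0]
    rw [ha] at h1
    rw [h1, mul_zero, add_zero] at h0
    exact one_ne_zero h0
  refine ⟨hsub, fun hc => subset_antisymm hsub ?_⟩
  intro w hw
  simp only [Set.mem_setOf_eq] at hw
  set w' : Fin (n + 1) → k := fun i => w i.succ with hw'
  rcases eq_or_ne (w 0) 0 with h0 | h0
  · -- w 0 = 0, so q(w') ≠ 0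
    have hq0 : eval w' q ≠ 0 := fun h => hw ⟨h0, h⟩
    refine ⟨⟨w', -(eval w' q)⁻¹, 0⟩, ?_⟩
    have hA : 1 + -(eval w' q)⁻¹ * eval w' q = 0 := by
      field_simp
      norm_num
    funext j
    refine Fin.cases ?_ (fun i => ?_) j
    · simp only [Fin.cons_zero, hA, h0]
    · simp only [Fin.cons_succ]
      split <;> simp [hA, hw']
  · -- w 0 ≠ 0
    obtain ⟨t, ht⟩ := stmt16_aux q hc w'
    set a : Fin (n + 1) → k := Function.update w' (Fin.last n) t with ha
    refine ⟨⟨a, (w 0 - 1) / eval a q, (w' (Fin.last n) - t) / w 0⟩, ?_⟩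
    have hA : 1 + (w 0 - 1) / eval a q * eval a q = w 0 := by
      rw [div_mul_cancel₀ _ ht]; ring
    funext j
    refine Fin.cases ?_ (fun i => ?_) j
    · simp only [Fin.cons_zero, hA]
    · simp only [Fin.cons_succ]
      rcases eq_or_ne i (Fin.last n) with rfl | hi
      · rw [if_pos rfl, hA, ha, Function.update_self, div_mul_cancel₀ _ h0]
        ring_nf
        rfl
      · rw [if_neg hi, ha, Function.update_of_ne hi]
end
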